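/- arXiv:1511.08653 — 10 statements merged into one kernel-verified Lean document; each statement's English description precedes it below -/
import Mathlib

section
/- For all natural numbers n and k with n + 2 ≤ 2k, the integers t_j = C(n, j) - C(n, j+1) satisfy t_{k-1} · t_{k+1} ≤ t_k², i.e. (C(n, k-1) - C(n, k)) · (C(n, k+1) - C(n, k+2)) ≤ (C(n, k) - C(n, k+1))² in ℤ. Consequently, for every fixed n the sequence i^{2row}_{n,1}, …, i^{2row}_{n,n}, where i^{2row}_{n,k} counts involutions of [n] of two-rowed shape (k, n-k) with longest increasing subsequence of length k, is log concave. -/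
/-!
Writing `c = C(n, k)`, `a = 2k + 1 - n` and `t_j = C(n, j) - C(n, j + 1)`, the relation
`C(n, j + 1) (j + 1) = C(n, j) (n - j)` gives `(n - k + 1) t_{k-1} = (a - 2) c`,
`(k + 1) t_k = a c` and `(k + 1)(k + 2) t_{k+1} = (n - k)(a + 2) c`. Hence, for `k ≤ n`,
`t_{k-1} t_{k+1} / t_k² = (n - k)/(n - k + 1) · (k + 1)/(k + 2) · (a² - 4)/a²`,
a product of factors at most `1`.
-/

def ballot (n j : ℕ) : ℤ := n.choose j - n.choose (j + 1)

lemma choose_succ_right_eq_int (n j : ℕ) :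
    (n.choose (j + 1) : ℤ) * (j + 1) = n.choose j * (n - j) := by
  rcases le_or_gt j n with h | h
  · have := Nat.choose_succ_right_eq n j
    rw [← Nat.cast_sub h]
    exact_mod_cast this
  · simp [Nat.choose_eq_zero_of_lt h, Nat.choose_eq_zero_of_lt (Nat.lt_succ_of_lt h)]

lemma ballot_eq_zero_of_lt {n j : ℕ} (h : n < j) : ballot n j = 0 := by
  simp [ballot, Nat.choose_eq_zero_of_lt h, Nat.choose_eq_zero_of_lt (Nat.lt_succ_of_lt h)]

lemma ballot_mul_ballot_le_sq (n m : ℕ) :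
    ballot n m * ballot n (m + 2) ≤ ballot n (m + 1) ^ 2 := by
  rcases le_or_gt n m with hnm | hmn
  · rw [ballot_eq_zero_of_lt (by omega : n < m + 2), mul_zero]
    exact sq_nonneg _
  set c : ℤ := (n.choose (m + 1) : ℤ)
  set a : ℤ := 2 * m + 3 - n
  have e₀ := choose_succ_right_eq_int n m
  have e₁ : (n.choose (m + 2) : ℤ) * (m + 2) = c * (n - m - 1) := by
    convert choose_succ_right_eq_int n (m + 1) using 2 <;> push_cast <;> ring
  have e₂ : (n.choose (m + 2 + 1) : ℤ) * (m + 3) = n.choose (m + 2) * (n - m - 2) := by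
    convert choose_succ_right_eq_int n (m + 2) using 2 <;> push_cast <;> ring
  have h₀ : (n - m) * ballot n m = (a - 2) * c := by
    unfold ballot; linear_combination -e₀
  have h₁ : (m + 2) * ballot n (m + 1) = a * c := by
    unfold ballot; linear_combination -e₁
  have h₂ : (m + 2) * (m + 3) * ballot n (m + 2) = (n - m - 1) * (a + 2) * c := by
    unfold ballot; linear_combination (a + 2) * e₁ - (m + 2) * e₂
  have hle : (m : ℤ) + 1 ≤ n := by exact_mod_cast hmn
  have hD : (0 : ℤ) < (n - m) * (m + 2) ^ 2 * (m + 3) := by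
    have : (0 : ℤ) < n - m := by linarith
    positivity
  have hgap : 0 ≤ c ^ 2 * (a ^ 2 * (n + 2) + 4 * (m + 2) * (n - m - 1)) := by
    have : (0 : ℤ) ≤ n - m - 1 := by linarith
    positivity
  refine le_of_mul_le_mul_left ?_ hD
  calc (n - m) * (m + 2) ^ 2 * (m + 3) * (ballot n m * ballot n (m + 2))
      = (m + 2) * (n - m - 1) * (a ^ 2 - 4) * c ^ 2 := by
        linear_combination (m + 2) * ((m + 2) * (m + 3) * ballot n (m + 2) * h₀
          + (a - 2) * c * h₂)
    _ ≤ (m + 2) * (n - m - 1) * (a ^ 2 - 4) * c ^ 2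
          + c ^ 2 * (a ^ 2 * (n + 2) + 4 * (m + 2) * (n - m - 1)) := le_add_of_nonneg_right hgap
    _ = (n - m) * (m + 2) ^ 2 * (m + 3) * ballot n (m + 1) ^ 2 := by
        linear_combination (-(n - m) * (m + 3)) * ((m + 2) * ballot n (m + 1) + a * c) * h₁

theorem two_row_involutions_log_concave_general (n k : ℕ) :
    ((n.choose (k - 1) : ℤ) - n.choose k) * ((n.choose (k + 1) : ℤ) - n.choose (k + 2)) ≤
      ((n.choose k : ℤ) - n.choose (k + 1)) ^ 2 := by
  cases k with
  | zero => simpa using sq_nonneg ((1 : ℤ) - n)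
  | succ m => simpa [ballot, add_assoc] using ballot_mul_ballot_le_sq n m

/-- Log concavity of the ballot numbers `t_k = C(n,k) - C(n,k+1)` counting involutions
of `[n]` of two-rowed shape `(k, n-k)` with longest increasing subsequence of length `k`. -/
theorem two_row_involutions_log_concave (n k : ℕ) (hk : n + 2 ≤ 2 * k) :
    ((n.choose (k - 1) : ℤ) - n.choose k) * ((n.choose (k + 1) : ℤ) - n.choose (k + 2)) ≤
      ((n.choose k : ℤ) - n.choose (k + 1)) ^ 2 :=
  two_row_involutions_log_concave_general n k
end

section
/- For all natural numbers n and k with n + 2 ≤ 2k, one has ((C(n, k-1) - C(n, k)) · (C(n, k+1) - C(n, k+2)))² ≤ ((C(n, k) - C(n, k+1))²)² in ℤ. Consequently, for every fixed n the sequence ℓ^{2row}_{n,1}, …, ℓ^{2row}_{n,n}, where ℓ^{2row}_{n,k} = (C(n, k) - C(n, k+1))² counts permutations of [n] of two-rowed shape (k, n-k) with longest increasing subsequence of length k, is log concave. -/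
/-!
The ballot number `C(n, k) - C(n, k + 1)` equals `C(n, k) * (2k + 1 - n) / (k + 1)`. For
`2k + 1 ≥ n` both factors are nonnegative and log-concave in `k`, so their product is log-concave,
and squaring preserves log-concavity of nonnegative sequences.
-/

section LogConcave

variable {K : Type*} [Field K] [LinearOrder K] [IsStrictOrderedRing K]

/-- Log-concavity of `j ↦ (x + 2j) / (y + j)`. -/
theorem div_mul_div_le_sq_of_abs_le {x y : K} (hy : 0 < y) (hxy : |x + 2| ≤ 2 * (y + 1)) :
    x / y * ((x + 4) / (y + 2)) ≤ ((x + 2) / (y + 1)) ^ 2 := by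
  rw [div_mul_div_comm, div_pow, div_le_div_iff₀ (by positivity) (by positivity)]
  have := sq_le_sq' (abs_le.1 hxy).1 (abs_le.1 hxy).2
  nlinarith

namespace Nat

theorem choose_mul_choose_add_two_le_sq (n k : ℕ) :
    n.choose k * n.choose (k + 2) ≤ n.choose (k + 1) ^ 2 := by
  rcases le_or_gt n k with hnk | hkn
  · simp [choose_eq_zero_of_lt (show n < k + 2 by omega)]
  have step₁ := choose_succ_right_eq n k
  have step₂ := choose_succ_right_eq n (k + 1)
  refine le_of_mul_le_mul_right ?_ (Nat.mul_pos (succ_pos (k + 1)) (Nat.sub_pos_of_lt hkn))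
  calc n.choose k * n.choose (k + 2) * ((k + 2) * (n - k))
      = n.choose (k + 1) * (k + 1) * (n.choose (k + 1) * (n - (k + 1))) := by
        rw [step₁, ← step₂]; ring
    _ ≤ n.choose (k + 1) * (k + 2) * (n.choose (k + 1) * (n - k)) := by
        gcongr <;> omega
    _ = n.choose (k + 1) ^ 2 * ((k + 2) * (n - k)) := by ring

theorem cast_choose_sub_choose_succ (n k : ℕ) :
    (n.choose k : K) - n.choose (k + 1) = n.choose k * ((2 * k + 1 - n) / (k + 1)) := by
  rcases le_or_gt k n with hkn | hnk
  · have h : (n.choose (k + 1) : K) * (k + 1) = n.choose k * (n - k) := by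
      exact_mod_cast choose_succ_right_eq n k
    field_simp
    linear_combination -h
  · simp [choose_eq_zero_of_lt hnk, choose_eq_zero_of_lt (hnk.trans (lt_succ_self k))]

theorem cast_choose_sub_choose_succ_nonneg {n k : ℕ} (hn : n ≤ 2 * k + 1) :
    0 ≤ (n.choose k : K) - n.choose (k + 1) := by
  have hn' : (n : K) ≤ 2 * k + 1 := by exact_mod_cast hn
  rw [cast_choose_sub_choose_succ]
  exact mul_nonneg (cast_nonneg _) (div_nonneg (by linarith) (by positivity))

theorem cast_choose_sub_choose_succ_log_concave {n k : ℕ} (hn : n ≤ 2 * k + 1) :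
    ((n.choose k : K) - n.choose (k + 1)) * (n.choose (k + 2) - n.choose (k + 3)) ≤
      ((n.choose (k + 1) : K) - n.choose (k + 2)) ^ 2 := by
  have hn' : (n : K) ≤ 2 * k + 1 := by exact_mod_cast hn
  set x : K := 2 * k + 1 - n with hx_def
  set y : K := k + 1 with hy_def
  have hx : 0 ≤ x := by linarith
  have hy : 0 < y := by positivity
  have hratios : 0 ≤ x / y * ((x + 4) / (y + 2)) :=
    mul_nonneg (div_nonneg hx hy.le) (div_nonneg (by linarith) (by linarith))
  have hchoose : (n.choose k : K) * n.choose (k + 2) ≤ (n.choose (k + 1) : K) ^ 2 := by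
    exact_mod_cast choose_mul_choose_add_two_le_sq n k
  have hxy : |x + 2| ≤ 2 * (y + 1) :=
    abs_le.2 ⟨by linarith, by linarith [(n.cast_nonneg : (0 : K) ≤ n)]⟩
  calc ((n.choose k : K) - n.choose (k + 1)) * (n.choose (k + 2) - n.choose (k + 3))
      = (n.choose k * n.choose (k + 2)) * (x / y * ((x + 4) / (y + 2))) := by
        rw [cast_choose_sub_choose_succ, cast_choose_sub_choose_succ]; push_cast; ring
    _ ≤ (n.choose (k + 1)) ^ 2 * ((x + 2) / (y + 1)) ^ 2 :=
        mul_le_mul hchoose (div_mul_div_le_sq_of_abs_le hy hxy) hratios (sq_nonneg _)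
    _ = ((n.choose (k + 1) : K) - n.choose (k + 2)) ^ 2 := by
        rw [cast_choose_sub_choose_succ]; push_cast; ring

end Nat

end LogConcave

/-- Log concavity of the squared ballot numbers `(C(n,k) - C(n,k+1))²` counting
permutations of `[n]` of two-rowed shape `(k, n-k)` with longest increasing
subsequence of length `k`. -/
theorem two_row_permutations_log_concave (n k : ℕ) (hk : n + 2 ≤ 2 * k) :
    (((n.choose (k - 1) : ℤ) - n.choose k) * ((n.choose (k + 1) : ℤ) - n.choose (k + 2))) ^ 2 ≤
      (((n.choose k : ℤ) - n.choose (k + 1)) ^ 2) ^ 2 := by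
  obtain ⟨j, rfl⟩ : ∃ j, k = j + 1 := ⟨k - 1, by omega⟩
  have hj : n ≤ 2 * j + 1 := by omega
  have h_nonneg : (0 : ℤ) ≤ ((n.choose j : ℤ) - n.choose (j + 1)) *
      ((n.choose (j + 2) : ℤ) - n.choose (j + 3)) := by
    exact_mod_cast mul_nonneg (Nat.cast_choose_sub_choose_succ_nonneg (K := ℚ) hj)
      (Nat.cast_choose_sub_choose_succ_nonneg (K := ℚ) (k := j + 2) (by omega))
  have h_le : ((n.choose j : ℤ) - n.choose (j + 1)) * ((n.choose (j + 2) : ℤ) - n.choose (j + 3)) ≤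
      ((n.choose (j + 1) : ℤ) - n.choose (j + 2)) ^ 2 := by
    exact_mod_cast Nat.cast_choose_sub_choose_succ_log_concave (K := ℚ) hj
  simpa only [Nat.add_sub_cancel] using pow_le_pow_left₀ h_nonneg h_le 2
end

section
/- For every natural number n ≥ 1, define I : ℕ → ℚ by I(k) = (2n)! / ((2n-k) · (2n-k+1) · (k-1)! · k! · (2n-2k)!) for 1 ≤ k ≤ n (all factors cast from ℕ to ℚ). Then for all k with 2 ≤ k ≤ n-1, one has I(k-1) · I(k+1) ≤ I(k)². Consequently, for every fixed n the sequence i^{dhook}_{2n,1}, …, i^{dhook}_{2n,n} counting involutions of [2n] of double hook shape (k², 1^{2n-2k}) with longest increasing subsequence of length k is log concave. -/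
/-!
The `k`-th term is `(2n)! / H (k - 1) (2n - 2k)`, where `H j r` is the product of the hook
lengths of the shape `((j+1)², 1^r)`, so log concavity of the terms is log convexity of `H`
along `(j, r) ↦ (j + 1, r - 2)`. Cancelling factorials in `H (j+1) (r+2)² ≤ H j (r+4) · H (j+2) r`
leaves a product of four factor-wise comparisons, the only non-obvious one being
`(j + 1)(r + j + 4) ≤ (j + 3)(r + j + 3)`.
-/

open scoped Nat

theorem div_mul_div_le_div_sq {K : Type*} [Field K] [LinearOrder K] [IsStrictOrderedRing K]
    {a b c d : K} (hc : 0 ≤ c) (hd : 0 < d) (h : d ^ 2 ≤ a * b) :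
    c / a * (c / b) ≤ (c / d) ^ 2 := by
  rw [div_mul_div_comm, ← sq, div_pow]
  exact div_le_div_of_nonneg_left (pow_nonneg hc 2) (pow_pos hd 2) h

/-- The product of the hook lengths of the Young diagram `((j+1)², 1^r)`. -/
def doubleHookHookProd (j r : ℕ) : ℕ :=
  (r + j + 1) * (r + j + 2) * j ! * (j + 1)! * r !

theorem doubleHookHookProd_pos (j r : ℕ) : 0 < doubleHookHookProd j r := by
  unfold doubleHookHookProd
  positivity

theorem doubleHookHookProd_sq_le (j r : ℕ) :
    doubleHookHookProd (j + 1) (r + 2) ^ 2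
      ≤ doubleHookHookProd j (r + 4) * doubleHookHookProd (j + 2) r := by
  have hcross : (j + 1) * (r + j + 4) ≤ (j + 3) * (r + j + 3) := by nlinarith
  have hfactors : (j + 1) * (r + j + 4) * (r + 1) * (r + 2) * (r + j + 5)
      ≤ (j + 3) * (r + j + 3) * (r + 3) * (r + 4) * (r + j + 6) := by
    gcongr <;> omega
  set common := (r + j + 4) * (r + j + 5) * j ! * (j + 1)! * (j + 2)! ^ 2 * r ! * (r + 2)!
  calc doubleHookHookProd (j + 1) (r + 2) ^ 2
      = (j + 1) * (r + j + 4) * (r + 1) * (r + 2) * (r + j + 5) * common := by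
        simp only [doubleHookHookProd, common, Nat.factorial_succ]; ring
    _ ≤ (j + 3) * (r + j + 3) * (r + 3) * (r + 4) * (r + j + 6) * common :=
        Nat.mul_le_mul_right _ hfactors
    _ = doubleHookHookProd j (r + 4) * doubleHookHookProd (j + 2) r := by
        simp only [doubleHookHookProd, common, Nat.factorial_succ]; ring

theorem cast_doubleHookHookProd {n k : ℕ} (hk : 1 ≤ k) (hkn : k ≤ n) :
    ((2 * n - k : ℕ) : ℚ) * ((2 * n - k + 1 : ℕ) : ℚ) * ((k - 1)! : ℚ) * (k ! : ℚ)
        * ((2 * n - 2 * k)! : ℚ)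
      = doubleHookHookProd (k - 1) (2 * n - 2 * k) := by
  obtain ⟨j, rfl⟩ : ∃ j, k = j + 1 := ⟨k - 1, by omega⟩
  have hsub : 2 * n - (j + 1) = (2 * n - 2 * (j + 1)) + j + 1 := by omega
  rw [hsub, Nat.add_sub_cancel, doubleHookHookProd]
  push_cast
  ring

theorem double_hook_involutions_log_concave_general (n : ℕ) (I : ℕ → ℚ)
    (hI : ∀ k, 1 ≤ k → k ≤ n →
      I k = (Nat.factorial (2 * n) : ℚ) /
        (((2 * n - k : ℕ) : ℚ) * ((2 * n - k + 1 : ℕ) : ℚ) *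
          (Nat.factorial (k - 1) : ℚ) * (Nat.factorial k : ℚ) *
          (Nat.factorial (2 * n - 2 * k) : ℚ))) :
    ∀ k, 2 ≤ k → k ≤ n - 1 → I (k - 1) * I (k + 1) ≤ (I k) ^ 2 := by
  intro k hk hkn
  have hH : ∀ i, 1 ≤ i → i ≤ n →
      I i = (2 * n)! / (doubleHookHookProd (i - 1) (2 * n - 2 * i) : ℚ) := fun i hi hin => by
    rw [hI i hi hin, cast_doubleHookHookProd hi hin]
  rw [hH (k - 1) (by omega) (by omega), hH k (by omega) (by omega),
    hH (k + 1) (by omega) (by omega)]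
  refine div_mul_div_le_div_sq (by positivity) (mod_cast doubleHookHookProd_pos _ _) ?_
  obtain ⟨j, rfl⟩ : ∃ j, k = j + 2 := ⟨k - 2, by omega⟩
  obtain ⟨r, hr⟩ : ∃ r, 2 * n - 2 * (j + 2 + 1) = r := ⟨_, rfl⟩
  have hprev : 2 * n - 2 * (j + 2 - 1) = r + 4 := by omega
  have hcur : 2 * n - 2 * (j + 2) = r + 2 := by omega
  rw [hprev, hcur, hr]
  exact_mod_cast doubleHookHookProd_sq_le j r

/-- Log concavity of the sequence counting involutions of `[2n]` of double hook
shape `(k², 1^(2n-2k))` with longest increasing subsequence of length `k`, whose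
`k`-th term is given by the hook length formula as
`(2n)! / ((2n-k)(2n-k+1)(k-1)! k! (2n-2k)!)`. -/
theorem double_hook_involutions_log_concave (n : ℕ) (hn : 1 ≤ n) (I : ℕ → ℚ)
    (hI : ∀ k, 1 ≤ k → k ≤ n →
      I k = (Nat.factorial (2 * n) : ℚ) /
        (((2 * n - k : ℕ) : ℚ) * ((2 * n - k + 1 : ℕ) : ℚ) *
          (Nat.factorial (k - 1) : ℚ) * (Nat.factorial k : ℚ) *
          (Nat.factorial (2 * n - 2 * k) : ℚ))) :
    ∀ k, 2 ≤ k → k ≤ n - 1 → I (k - 1) * I (k + 1) ≤ (I k) ^ 2 :=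
  double_hook_involutions_log_concave_general n I hI
end

section
/- For all natural numbers n and k with 1 ≤ k ≤ n, the following inequality holds in ℤ: (k-1) · (2n-2k) · (2n-2k-1) · (2n-k+1) · (2n-k) ≤ (k+1) · (2n-2k+2) · (2n-2k+1) · (2n-k+2) · (2n-k-1). -/
/-! Put `F = x(x-1)` with `x = 2n-2k` and `G = m(m+1)` with `m = 2n-k`. The right-hand factors are
`(x+2)(x+1) = F + (4x+2)` and `(m+2)(m-1) = G - 2`, so the inequality reads
`(k-1) F G ≤ (k+1) (F + D) (G - 2)` with `D = 4x+2`. The difference of the two sides is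
`2F (G-k-1) + (k+1) D (G-2)`, and each factor is nonnegative because `F ≥ 0` on integers and
`G ≥ m + 1 ≥ k + 1 ≥ 2`. -/

theorem sub_one_mul_mul_le_add_one_mul_add_mul_sub_two {R : Type*} [CommRing R] [LinearOrder R]
    [IsStrictOrderedRing R] {a F D G : R} (ha : 1 ≤ a) (hF : 0 ≤ F) (hD : 0 ≤ D)
    (hG : a + 1 ≤ G) : (a - 1) * F * G ≤ (a + 1) * (F + D) * (G - 2) := by
  have hdiff : (a + 1) * (F + D) * (G - 2) - (a - 1) * F * G =
      2 * F * (G - (a + 1)) + (a + 1) * D * (G - 2) := by ring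
  have hsum : 0 ≤ 2 * F * (G - (a + 1)) + (a + 1) * D * (G - 2) := by
    apply add_nonneg
    · exact mul_nonneg (by positivity) (sub_nonneg.2 hG)
    · exact mul_nonneg (mul_nonneg (by linarith) hD) (by linarith)
  exact sub_nonneg.1 (hdiff ▸ hsum)

theorem Int.mul_sub_one_nonneg (x : ℤ) : 0 ≤ x * (x - 1) := by
  have := Int.le_self_sq x
  nlinarith

/-- The integer inequality to which the log concavity of the double hook counting
sequence reduces after substituting the hook length formula and cancelling. -/
theorem double_hook_integer_inequality (n k : ℕ) (hk1 : 1 ≤ k) (hkn : k ≤ n) :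
    ((k : ℤ) - 1) * (2 * (n : ℤ) - 2 * k) * (2 * (n : ℤ) - 2 * k - 1) *
        (2 * (n : ℤ) - k + 1) * (2 * (n : ℤ) - k) ≤
      ((k : ℤ) + 1) * (2 * (n : ℤ) - 2 * k + 2) * (2 * (n : ℤ) - 2 * k + 1) *
        (2 * (n : ℤ) - k + 2) * (2 * (n : ℤ) - k - 1) := by
  have hk : (1 : ℤ) ≤ k := mod_cast hk1
  have hkn' : (k : ℤ) ≤ n := mod_cast hkn
  set x : ℤ := 2 * n - 2 * k
  set m : ℤ := 2 * n - k
  have hG : (k : ℤ) + 1 ≤ m * (m + 1) := by nlinarith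
  have key := sub_one_mul_mul_le_add_one_mul_add_mul_sub_two hk
    (Int.mul_sub_one_nonneg x) (show (0 : ℤ) ≤ 4 * x + 2 by omega) hG
  linear_combination key
end

section
/- Let u : ℝ → ℝ be twice continuously differentiable, satisfying u''(x) = x·u(x) + 2·u(x)³ for all real x, with u(x) → 0, u'(x) → 0 and x·u(x)² → 0 as x → ∞, and such that t ↦ u(t)² is integrable on (x, ∞) for every real x. Then for every real x, (u'(x))² = x·u(x)² + h(x) + u(x)⁴, where h(x) = ∫ₓ^∞ u(t)² dt. -/
open MeasureTheory Filter Set Topology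

/-!
Along a solution of Painlevé II the quantity `E = u'² - x u² - u⁴` satisfies
`E' = 2u'(u'' - x u - 2u³) - u² = -u²`, and the decay assumptions make `E → 0` at `∞`.
Hence `E(x) = ∫ₓ^∞ u²` by the fundamental theorem of calculus on `(x, ∞)`.
-/

namespace PainleveII

noncomputable def firstIntegral (u : ℝ → ℝ) (x : ℝ) : ℝ :=
  deriv u x ^ 2 - x * u x ^ 2 - u x ^ 4

theorem hasDerivAt_firstIntegral {u : ℝ → ℝ} {y : ℝ} (hu : HasDerivAt u (deriv u y) y)
    (hu' : HasDerivAt (deriv u) (y * u y + 2 * u y ^ 3) y) :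
    HasDerivAt (firstIntegral u) (-u y ^ 2) y := by
  have h : HasDerivAt (firstIntegral u) _ y :=
    ((hu'.fun_pow 2).fun_sub ((hasDerivAt_id' y).fun_mul (hu.fun_pow 2))).fun_sub (hu.fun_pow 4)
  exact h.congr_deriv (by norm_num; ring)

theorem tendsto_firstIntegral_atTop {u : ℝ → ℝ} (hu0 : Tendsto u atTop (𝓝 0))
    (hu'0 : Tendsto (deriv u) atTop (𝓝 0))
    (hxu : Tendsto (fun x : ℝ => x * u x ^ 2) atTop (𝓝 0)) :
    Tendsto (firstIntegral u) atTop (𝓝 0) := by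
  convert ((hu'0.pow 2).sub hxu).sub (hu0.pow 4) using 2 <;> simp [firstIntegral]

end PainleveII

open PainleveII in
/-- Multiplying the Painlevé II equation by `u'` and integrating from `x` to `∞`
gives `(u'(x))² = x·u(x)² + h(x) + u(x)⁴` where `h(x) = ∫ₓ^∞ u(t)² dt`. -/
theorem painleve_integrated_identity (u : ℝ → ℝ) (hu : ContDiff ℝ 2 u)
    (hode : ∀ x : ℝ, deriv (deriv u) x = x * u x + 2 * (u x) ^ 3)
    (hu0 : Tendsto u atTop (nhds 0))
    (hu'0 : Tendsto (deriv u) atTop (nhds 0))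
    (hxu : Tendsto (fun x : ℝ => x * (u x) ^ 2) atTop (nhds 0))
    (hint : ∀ x : ℝ, IntegrableOn (fun t : ℝ => (u t) ^ 2) (Ioi x)) :
    ∀ x : ℝ, (deriv u x) ^ 2 =
      x * (u x) ^ 2 + (∫ t in Ioi x, (u t) ^ 2) + (u x) ^ 4 := by
  intro x
  have hderiv (y : ℝ) : HasDerivAt (firstIntegral u) (-u y ^ 2) y := by
    refine hasDerivAt_firstIntegral (hu.differentiable two_ne_zero y).hasDerivAt ?_
    rw [← hode y]
    exact (hu.differentiable_deriv_two y).hasDerivAt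
  have hftc := integral_Ioi_of_hasDerivAt_of_tendsto' (fun y _ => hderiv y) (hint x).neg
    (tendsto_firstIntegral_atTop hu0 hu'0 hxu)
  rw [integral_neg] at hftc
  unfold firstIntegral at hftc
  linarith
end

section
/- Let u : ℝ → ℝ be twice continuously differentiable, satisfying u''(x) = x·u(x) + 2·u(x)³ for all real x, with u(x) → 0, u'(x) → 0 and x·u(x)² → 0 as x → ∞, and such that t ↦ u(t)² is integrable on (x, ∞) for every real x. If u is not identically zero, then u'(x) · u(x) < 0 for all x ≥ 0. In particular, u has no zero on [0, ∞). -/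
/-!
On `[0, ∞)` the function `u u'` is nondecreasing, since `(u u')' = u'² + x u² + 2 u⁴ ≥ 0`.
If `u u' ≥ 0` at some `a ≥ 0`, then `u u' ≥ 0` on `[a, ∞)`, so `u²` is nondecreasing there; as
`u² → 0`, `u` vanishes on `[a, ∞)`, and uniqueness for the ODE forces `u ≡ 0`. Uniqueness comes
from Grönwall's inequality for the energy `u² + u'²`, whose derivative is
`2 u u' (1 + x + 2 u²)`.
-/

open MeasureTheory Filter Set

lemma eq_zero_of_abs_deriv_le_mul_abs_of_le {f f' B : ℝ → ℝ} (hB : Continuous B)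
    (hf : ∀ x, HasDerivAt f (f' x) x) (hbound : ∀ x, |f' x| ≤ B x * |f x|)
    {a x : ℝ} (ha : f a = 0) (hax : a ≤ x) : f x = 0 := by
  obtain ⟨K, hK⟩ := (isCompact_Icc (a := a) (b := x)).exists_bound_of_continuousOn hB.continuousOn
  refine eq_zero_of_abs_deriv_le_mul_abs_self_of_eq_zero_right (K := K)
    (HasDerivAt.continuousOn fun y _ => hf y) (fun y _ => (hf y).hasDerivWithinAt) ha
    (fun y hy => ?_) x ⟨hax, le_rfl⟩
  calc ‖f' y‖ = |f' y| := rfl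
    _ ≤ B y * |f y| := hbound y
    _ ≤ K * ‖f y‖ := mul_le_mul_of_nonneg_right
        ((le_abs_self _).trans (hK y (Ico_subset_Icc_self hy))) (abs_nonneg _)

lemma eq_zero_of_abs_deriv_le_mul_abs {f f' B : ℝ → ℝ} (hB : Continuous B)
    (hf : ∀ x, HasDerivAt f (f' x) x) (hbound : ∀ x, |f' x| ≤ B x * |f x|)
    {a : ℝ} (ha : f a = 0) (x : ℝ) : f x = 0 := by
  rcases le_total a x with hax | hxa
  · exact eq_zero_of_abs_deriv_le_mul_abs_of_le hB hf hbound ha hax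
  · have hreflect := eq_zero_of_abs_deriv_le_mul_abs_of_le (f := fun y => f (-y))
      (f' := fun y => -f' (-y)) (hB.comp continuous_neg)
      (fun y => by simpa [Function.comp_def] using (hf (-y)).comp y (hasDerivAt_neg y))
      (fun y => by simpa using hbound (-y)) (a := -a) (x := -x) (by simpa using ha)
      (neg_le_neg hxa)
    simpa using hreflect

structure PainleveIISolution (u : ℝ → ℝ) : Prop where
  contDiff : ContDiff ℝ 2 u
  ode : ∀ x, deriv (deriv u) x = x * u x + 2 * u x ^ 3

namespace PainleveIISolution

variable {u : ℝ → ℝ}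

lemma hasDerivAt (h : PainleveIISolution u) (x : ℝ) : HasDerivAt u (deriv u x) x :=
  (h.contDiff.differentiable (by norm_num) x).hasDerivAt

lemma hasDerivAt_deriv (h : PainleveIISolution u) (x : ℝ) :
    HasDerivAt (deriv u) (x * u x + 2 * u x ^ 3) x :=
  h.ode x ▸ (h.contDiff.differentiable_deriv_two x).hasDerivAt

lemma eq_zero_of_eq_zero_of_deriv_eq_zero (h : PainleveIISolution u) {a : ℝ} (h0 : u a = 0)
    (h0' : deriv u a = 0) (x : ℝ) : u x = 0 := by
  have henergy : ∀ y, HasDerivAt (fun y => u y ^ 2 + deriv u y ^ 2)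
      (2 * u y * deriv u y * (1 + y + 2 * u y ^ 2)) y := fun y => by
    refine (((h.hasDerivAt y).fun_pow 2).fun_add ((h.hasDerivAt_deriv y).fun_pow 2)).congr_deriv ?_
    push_cast
    ring
  have hbound : ∀ y, |2 * u y * deriv u y * (1 + y + 2 * u y ^ 2)|
      ≤ |1 + y + 2 * u y ^ 2| * |u y ^ 2 + deriv u y ^ 2| := fun y => by
    rw [abs_mul, mul_comm, abs_of_nonneg (by positivity : 0 ≤ u y ^ 2 + deriv u y ^ 2)]
    refine mul_le_mul_of_nonneg_left (abs_le.mpr ⟨?_, ?_⟩) (abs_nonneg _)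
    · nlinarith [sq_nonneg (u y + deriv u y)]
    · nlinarith [sq_nonneg (u y - deriv u y)]
  have hcont : Continuous fun y => |1 + y + 2 * u y ^ 2| := by
    have := h.contDiff.continuous
    fun_prop
  have hx := eq_zero_of_abs_deriv_le_mul_abs hcont henergy hbound (a := a) (by simp [h0, h0']) x
  nlinarith [sq_nonneg (u x), sq_nonneg (deriv u x)]

lemma monotoneOn_mul_deriv (h : PainleveIISolution u) :
    MonotoneOn (fun x => u x * deriv u x) (Ici 0) := by
  refine monotoneOn_of_hasDerivWithinAt_nonneg (convex_Ici 0)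
    (HasDerivAt.continuousOn fun x _ => (h.hasDerivAt x).mul (h.hasDerivAt_deriv x))
    (fun x _ => ((h.hasDerivAt x).mul (h.hasDerivAt_deriv x)).hasDerivWithinAt) ?_
  intro x hx
  rw [interior_Ici, mem_Ioi] at hx
  have hx0 : 0 ≤ x := hx.le
  calc (0 : ℝ) ≤ deriv u x ^ 2 + x * u x ^ 2 + 2 * (u x ^ 2) ^ 2 := by positivity
    _ = deriv u x * deriv u x + u x * (x * u x + 2 * u x ^ 3) := by ring

lemma eqOn_zero_of_mul_deriv_nonneg (h : PainleveIISolution u) (hu0 : Tendsto u atTop (nhds 0))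
    {a : ℝ} (ha : 0 ≤ a) (hnn : 0 ≤ u a * deriv u a) : EqOn u 0 (Ici a) := by
  have hsq_deriv : ∀ x, HasDerivAt (fun x => u x ^ 2) (2 * (u x * deriv u x)) x := fun x => by
    refine ((h.hasDerivAt x).fun_pow 2).congr_deriv ?_
    push_cast
    ring
  have hsq_mono : MonotoneOn (fun x => u x ^ 2) (Ici a) := by
    refine monotoneOn_of_hasDerivWithinAt_nonneg (convex_Ici a)
      (HasDerivAt.continuousOn fun x _ => hsq_deriv x)
      (fun x _ => (hsq_deriv x).hasDerivWithinAt) fun x hx => ?_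
    rw [interior_Ici, mem_Ioi] at hx
    have := h.monotoneOn_mul_deriv (mem_Ici.mpr ha) (mem_Ici.mpr (ha.trans hx.le)) hx.le
    simp only at this
    linarith
  intro x hx
  have hsq_lim : Tendsto (fun x => u x ^ 2) atTop (nhds 0) := by simpa using hu0.pow 2
  have : u x ^ 2 ≤ 0 := ge_of_tendsto hsq_lim <|
    (eventually_ge_atTop x).mono fun y hy => hsq_mono hx (mem_Ici.mpr (le_trans hx hy)) hy
  simpa using this

end PainleveIISolution

theorem painleve_sign_claim_general (u : ℝ → ℝ) (hu : ContDiff ℝ 2 u)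
    (hode : ∀ x : ℝ, deriv (deriv u) x = x * u x + 2 * (u x) ^ 3)
    (hu0 : Tendsto u atTop (nhds 0))
    (hne : ¬ ∀ x : ℝ, u x = 0) :
    (∀ x : ℝ, 0 ≤ x → deriv u x * u x < 0) ∧ (∀ x : ℝ, 0 ≤ x → u x ≠ 0) := by
  have h : PainleveIISolution u := ⟨hu, hode⟩
  have hneg : ∀ x : ℝ, 0 ≤ x → deriv u x * u x < 0 := by
    intro a ha
    by_contra! hnn
    have hzero := h.eqOn_zero_of_mul_deriv_nonneg hu0 ha (by rwa [mul_comm])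
    have hlocal : u =ᶠ[nhds (a + 1)] 0 :=
      eventually_of_mem (Ioi_mem_nhds (lt_add_one a)) fun y hy => hzero (mem_Ici.mpr hy.le)
    have hderiv : deriv u (a + 1) = 0 := by simpa using hlocal.deriv_eq
    exact hne (h.eq_zero_of_eq_zero_of_deriv_eq_zero (hzero (by simp)) hderiv)
  exact ⟨hneg, fun x hx hx0 => by simpa [hx0] using hneg x hx⟩

/-- For a nonzero solution of Painlevé II with the given boundary conditions,
`u'(x)·u(x) < 0` for all `x ≥ 0`; in particular, `u` has no zero on `[0, ∞)`. -/
theorem painleve_sign_claim (u : ℝ → ℝ) (hu : ContDiff ℝ 2 u)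
    (hode : ∀ x : ℝ, deriv (deriv u) x = x * u x + 2 * (u x) ^ 3)
    (hu0 : Tendsto u atTop (nhds 0))
    (hu'0 : Tendsto (deriv u) atTop (nhds 0))
    (hxu : Tendsto (fun x : ℝ => x * (u x) ^ 2) atTop (nhds 0))
    (hint : ∀ x : ℝ, IntegrableOn (fun t : ℝ => (u t) ^ 2) (Ioi x))
    (hne : ¬ ∀ x : ℝ, u x = 0) :
    (∀ x : ℝ, 0 ≤ x → deriv u x * u x < 0) ∧ (∀ x : ℝ, 0 ≤ x → u x ≠ 0) :=
  painleve_sign_claim_general u hu hode hu0 hne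
end

section
/- Let u : ℝ → ℝ be twice continuously differentiable, satisfying u''(x) = x·u(x) + 2·u(x)³ for all real x, with u(x) → 0, u'(x) → 0 and x·u(x)² → 0 as x → ∞, and such that t ↦ u(t)² is integrable on (x, ∞) for every real x. If moreover u(x) > 0 and u'(x) < 0 for all x ≥ 0, then h(x) ≤ u(x)² for all x ≥ 1/4, where h(x) = ∫ₓ^∞ u(t)² dt. -/
/-!
Along a solution of `u'' = x u + 2 u³` the quantity `E = u'² - x u² - u⁴` has derivative `-u²`;
since `E → 0` at infinity, `h = E`. In particular `E ≥ 0`, so `u'² ≥ x u² ≥ u² / 4` for `x ≥ 1/4`,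
i.e. `-u' ≥ u / 2`. Hence `E - u²`, whose derivative is `-u² - 2 u u' ≥ 0`, increases to its
limit `0` on `[1/4, ∞)`, and `h - u² ≤ 0` there.
-/

open MeasureTheory Filter Set Topology

lemma le_of_hasDerivAt_of_nonneg_of_tendsto {f f' : ℝ → ℝ} {a l : ℝ}
    (hderiv : ∀ x ∈ Ici a, HasDerivAt f (f' x) x) (hf' : ∀ x ∈ Ioi a, 0 ≤ f' x)
    (hf : Tendsto f atTop (𝓝 l)) : f a ≤ l := by
  have h := integral_Ioi_of_hasDerivAt_of_nonneg' hderiv hf' hf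
  linarith [setIntegral_nonneg (μ := volume) measurableSet_Ioi hf']

namespace PainleveII

variable {u : ℝ → ℝ}

noncomputable def energy (u : ℝ → ℝ) (x : ℝ) : ℝ :=
  deriv u x ^ 2 - x * u x ^ 2 - u x ^ 4

lemma hasDerivAt_energy (hu : ContDiff ℝ 2 u)
    (hode : ∀ x, deriv (deriv u) x = x * u x + 2 * u x ^ 3) (x : ℝ) :
    HasDerivAt (energy u) (-u x ^ 2) x := by
  have hu' : HasDerivAt u (deriv u x) x := (hu.differentiable two_ne_zero x).hasDerivAt
  have hu'' : HasDerivAt (deriv u) (deriv (deriv u) x) x :=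
    ((ContDiff.iterate_deriv' 1 1 hu).differentiable one_ne_zero x).hasDerivAt
  refine (((hu''.pow 2).sub ((hasDerivAt_id x).mul (hu'.pow 2))).sub (hu'.pow 4)).congr_deriv ?_
  rw [hode]
  simp only [id, Pi.pow_apply]
  push_cast
  ring

lemma tendsto_energy_atTop (hu0 : Tendsto u atTop (𝓝 0))
    (hu'0 : Tendsto (deriv u) atTop (𝓝 0))
    (hxu : Tendsto (fun x => x * u x ^ 2) atTop (𝓝 0)) :
    Tendsto (energy u) atTop (𝓝 0) := by
  unfold energy
  simpa using ((hu'0.pow 2).sub hxu).sub (hu0.pow 4)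

lemma integral_Ioi_sq_eq_energy (hu : ContDiff ℝ 2 u)
    (hode : ∀ x, deriv (deriv u) x = x * u x + 2 * u x ^ 3)
    (hu0 : Tendsto u atTop (𝓝 0)) (hu'0 : Tendsto (deriv u) atTop (𝓝 0))
    (hxu : Tendsto (fun x => x * u x ^ 2) atTop (𝓝 0)) (x : ℝ) :
    ∫ t in Ioi x, u t ^ 2 = energy u x := by
  have h := integral_Ioi_of_hasDerivAt_of_nonpos' (a := x) (fun t _ => hasDerivAt_energy hu hode t)
    (fun t _ => neg_nonpos.mpr (sq_nonneg (u t))) (tendsto_energy_atTop hu0 hu'0 hxu)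
  rw [integral_neg] at h
  linarith

lemma hasDerivAt_energy_sub_sq (hu : ContDiff ℝ 2 u)
    (hode : ∀ x, deriv (deriv u) x = x * u x + 2 * u x ^ 3) (x : ℝ) :
    HasDerivAt (fun s => energy u s - u s ^ 2) (-u x ^ 2 - 2 * u x * deriv u x) x := by
  refine ((hasDerivAt_energy hu hode x).sub
    ((hu.differentiable two_ne_zero x).hasDerivAt.pow 2)).congr_deriv ?_
  push_cast
  ring

lemma sq_add_two_mul_deriv_nonpos {x : ℝ} (hx : 1 / 4 ≤ x) (hE : 0 ≤ energy u x)
    (hux : 0 < u x) (hu'x : deriv u x < 0) : u x ^ 2 + 2 * u x * deriv u x ≤ 0 := by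
  have h_sq : u x ^ 2 ≤ (-(2 * deriv u x)) ^ 2 := by
    unfold energy at hE
    nlinarith [pow_pos hux 4, mul_le_mul_of_nonneg_right hx (sq_nonneg (u x))]
  have h_slope : u x ≤ -(2 * deriv u x) := le_of_sq_le_sq h_sq (by linarith)
  nlinarith [mul_le_mul_of_nonneg_left h_slope hux.le]

end PainleveII

open PainleveII in
theorem painleve_h_le_u_sq_general (u : ℝ → ℝ) (hu : ContDiff ℝ 2 u)
    (hode : ∀ x : ℝ, deriv (deriv u) x = x * u x + 2 * (u x) ^ 3)
    (hu0 : Tendsto u atTop (nhds 0))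
    (hu'0 : Tendsto (deriv u) atTop (nhds 0))
    (hxu : Tendsto (fun x : ℝ => x * (u x) ^ 2) atTop (nhds 0))
    (hupos : ∀ x : ℝ, 0 ≤ x → 0 < u x)
    (hu'neg : ∀ x : ℝ, 0 ≤ x → deriv u x < 0) :
    ∀ x : ℝ, (1 / 4 : ℝ) ≤ x → (∫ t in Ioi x, (u t) ^ 2) ≤ (u x) ^ 2 := by
  intro x hx
  have h_eq := integral_Ioi_sq_eq_energy hu hode hu0 hu'0 hxu
  have h_deriv_nonneg : ∀ t ∈ Ioi x, 0 ≤ -u t ^ 2 - 2 * u t * deriv u t := fun t ht => by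
    have ht : 1 / 4 ≤ t := hx.trans ht.le
    have ht0 : 0 ≤ t := by linarith
    have hE : 0 ≤ energy u t :=
      h_eq t ▸ setIntegral_nonneg measurableSet_Ioi fun _ _ => sq_nonneg _
    linarith [sq_add_two_mul_deriv_nonpos ht hE (hupos t ht0) (hu'neg t ht0)]
  have h_lim : Tendsto (fun s => energy u s - u s ^ 2) atTop (𝓝 0) := by
    simpa using (tendsto_energy_atTop hu0 hu'0 hxu).sub (hu0.pow 2)
  have h_le := le_of_hasDerivAt_of_nonneg_of_tendsto
    (fun t _ => hasDerivAt_energy_sub_sq hu hode t) h_deriv_nonneg h_lim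
  rw [h_eq]
  linarith

/-- For the positive decreasing solution of Painlevé II with the given boundary
conditions, `h(x) ≤ u(x)²` for all `x ≥ 1/4`, where `h(x) = ∫ₓ^∞ u(t)² dt`. -/
theorem painleve_h_le_u_sq (u : ℝ → ℝ) (hu : ContDiff ℝ 2 u)
    (hode : ∀ x : ℝ, deriv (deriv u) x = x * u x + 2 * (u x) ^ 3)
    (hu0 : Tendsto u atTop (nhds 0))
    (hu'0 : Tendsto (deriv u) atTop (nhds 0))
    (hxu : Tendsto (fun x : ℝ => x * (u x) ^ 2) atTop (nhds 0))
    (hint : ∀ x : ℝ, IntegrableOn (fun t : ℝ => (u t) ^ 2) (Ioi x))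
    (hupos : ∀ x : ℝ, 0 ≤ x → 0 < u x)
    (hu'neg : ∀ x : ℝ, 0 ≤ x → deriv u x < 0) :
    ∀ x : ℝ, (1 / 4 : ℝ) ≤ x → (∫ t in Ioi x, (u t) ^ 2) ≤ (u x) ^ 2 :=
  painleve_h_le_u_sq_general u hu hode hu0 hu'0 hxu hupos hu'neg
end

section
/- Let u : ℝ → ℝ be twice continuously differentiable, satisfying u''(x) = x·u(x) + 2·u(x)³ for all real x, with u(x) → 0, u'(x) → 0 and x·u(x)² → 0 as x → ∞, and such that t ↦ u(t)² is integrable on (x, ∞) for every real x; suppose u(x) > 0 for all x ≥ 0. Define h(x) = ∫ₓ^∞ u(t)² dt and g(x) = h(x)² + 2·(u'(x)/u(x))·h(x) + u(x)². Then for every x ≥ 0, the derivative of g at x equals -2·h(x)²/u(x)². -/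
/-!
With `h' = -u²`, differentiating `h² + 2 (u'/u) h + u²` gives
`-2 h u² + 2 h (u'' u - u'²) / u²`. Painlevé II has the first integral
`u'² - x u² - u⁴ - h`, whose derivative vanishes by the equation and which tends to `0`
at `+∞`; hence `u'² = x u² + u⁴ + h`, so `u'' u - u'² = u⁴ - h` and the two terms
combine to `-2 h² / u²`.
-/

open MeasureTheory Filter Set Topology

theorem hasDerivAt_integral_Ioi {E : Type*} [NormedAddCommGroup E] [NormedSpace ℝ E]
    [CompleteSpace E] {f : ℝ → E} {a x : ℝ} (hf : IntegrableOn f (Ioi a)) (hax : a < x)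
    (hfx : ContinuousAt f x) :
    HasDerivAt (fun y => ∫ t in Ioi y, f t) (-f x) x := by
  have hprim : HasDerivAt (fun y => ∫ t in a..y, f t) (f x) x :=
    intervalIntegral.integral_hasDerivAt_right
      ((intervalIntegrable_iff_integrableOn_Ioc_of_le hax.le).2
        (hf.mono_set Ioc_subset_Ioi_self))
      (AEStronglyMeasurable.stronglyMeasurableAtFilter_of_mem hf.aestronglyMeasurable
        (Ioi_mem_nhds hax)) hfx
  have hsplit : (fun y => ∫ t in Ioi y, f t) =ᶠ[𝓝 x]
      fun y => (∫ t in Ioi a, f t) - ∫ t in a..y, f t := by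
    filter_upwards [Ioi_mem_nhds hax] with y hay
    rw [← intervalIntegral.integral_Ioi_sub_Ioi hf hay.le, sub_sub_cancel]
  simpa using ((hasDerivAt_const x _).sub hprim).congr_of_eventuallyEq hsplit

theorem eq_zero_of_hasDerivAt_zero_of_tendsto_atTop {E : Type*} [NormedAddCommGroup E]
    [NormedSpace ℝ E] {F : ℝ → E}
    (hF : ∀ x, HasDerivAt F 0 x) (hlim : Tendsto F atTop (𝓝 0)) (x : ℝ) : F x = 0 := by
  have hconst : F = fun _ => F x := funext fun y =>
    is_const_of_deriv_eq_zero (fun z => (hF z).differentiableAt) (fun z => (hF z).deriv) y x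
  rw [hconst] at hlim
  exact tendsto_nhds_unique tendsto_const_nhds hlim

section PainleveII

variable {u u' : ℝ → ℝ}

theorem sq_deriv_eq_of_painleveII (hu : ∀ x, HasDerivAt u (u' x) x)
    (hu' : ∀ x, HasDerivAt u' (x * u x + 2 * u x ^ 3) x)
    (hint : ∀ x, IntegrableOn (fun t => u t ^ 2) (Ioi x))
    (hu0 : Tendsto u atTop (𝓝 0)) (hu'0 : Tendsto u' atTop (𝓝 0))
    (hxu : Tendsto (fun x => x * u x ^ 2) atTop (𝓝 0)) (x : ℝ) :
    u' x ^ 2 = x * u x ^ 2 + u x ^ 4 + ∫ t in Ioi x, u t ^ 2 := by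
  have hh : ∀ y, HasDerivAt (fun z => ∫ t in Ioi z, u t ^ 2) (-u y ^ 2) y := fun y =>
    hasDerivAt_integral_Ioi (hint (y - 1)) (sub_one_lt y) ((hu y).continuousAt.pow 2)
  have hF : ∀ y, HasDerivAt
      (fun z => u' z ^ 2 - z * u z ^ 2 - u z ^ 4 - ∫ t in Ioi z, u t ^ 2) 0 y := by
    intro y
    refine ((((hu' y).fun_pow 2).fun_sub ((hasDerivAt_id' y).fun_mul
      ((hu y).fun_pow 2))).fun_sub ((hu y).fun_pow 4)).fun_sub (hh y) |>.congr_deriv ?_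
    push_cast
    ring
  have hlim : Tendsto
      (fun z => u' z ^ 2 - z * u z ^ 2 - u z ^ 4 - ∫ t in Ioi z, u t ^ 2) atTop (𝓝 0) := by
    simpa using (((hu'0.pow 2).sub hxu).sub (hu0.pow 4)).sub
      (tendsto_integral_Ioi_zero tendsto_id)
  linear_combination eq_zero_of_hasDerivAt_zero_of_tendsto_atTop hF hlim x

theorem hasDerivAt_painleve_g {h : ℝ → ℝ} {x : ℝ} (hu : HasDerivAt u (u' x) x)
    (hu' : HasDerivAt u' (x * u x + 2 * u x ^ 3) x) (hh : HasDerivAt h (-u x ^ 2) x)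
    (hux : u x ≠ 0) (henergy : u' x ^ 2 = x * u x ^ 2 + u x ^ 4 + h x) :
    HasDerivAt (fun y => h y ^ 2 + 2 * (u' y / u y) * h y + u y ^ 2)
      (-2 * h x ^ 2 / u x ^ 2) x := by
  refine ((hh.fun_pow 2).fun_add (((hu'.div hu hux).const_mul 2).fun_mul hh)).fun_add
    (hu.fun_pow 2) |>.congr_deriv ?_
  simp only [Pi.div_apply]
  push_cast
  field_simp
  linear_combination -h x * henergy

end PainleveII

/-- For a positive solution of Painlevé II with the given boundary conditions, the
function `g(x) = h(x)² + 2·(u'(x)/u(x))·h(x) + u(x)²` has derivative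
`-2·h(x)²/u(x)²` at every `x ≥ 0`, where `h(x) = ∫ₓ^∞ u(t)² dt`. -/
theorem painleve_g_deriv (u : ℝ → ℝ) (hu : ContDiff ℝ 2 u)
    (hode : ∀ x : ℝ, deriv (deriv u) x = x * u x + 2 * (u x) ^ 3)
    (hu0 : Tendsto u atTop (nhds 0))
    (hu'0 : Tendsto (deriv u) atTop (nhds 0))
    (hxu : Tendsto (fun x : ℝ => x * (u x) ^ 2) atTop (nhds 0))
    (hint : ∀ x : ℝ, IntegrableOn (fun t : ℝ => (u t) ^ 2) (Ioi x))
    (hupos : ∀ x : ℝ, 0 ≤ x → 0 < u x) :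
    ∀ x : ℝ, 0 ≤ x →
      HasDerivAt
        (fun y : ℝ => (∫ t in Ioi y, (u t) ^ 2) ^ 2 +
          2 * (deriv u y / u y) * (∫ t in Ioi y, (u t) ^ 2) + (u y) ^ 2)
        (-2 * (∫ t in Ioi x, (u t) ^ 2) ^ 2 / (u x) ^ 2) x := by
  intro x hx
  have hu1 : ∀ y, HasDerivAt u (deriv u y) y := fun y =>
    (hu.differentiable two_ne_zero y).hasDerivAt
  have hu2 : ∀ y, HasDerivAt (deriv u) (y * u y + 2 * u y ^ 3) y := fun y =>
    hode y ▸ ((hu.iterate_deriv' 1 1).differentiable one_ne_zero y).hasDerivAt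
  exact hasDerivAt_painleve_g (hu1 x) (hu2 x)
    (hasDerivAt_integral_Ioi (hint (x - 1)) (sub_one_lt x) ((hu1 x).continuousAt.pow 2))
    (hupos x hx).ne' (sq_deriv_eq_of_painleveII hu1 hu2 hint hu0 hu'0 hxu x)
end

section
/- Let r₀ = (3 + √5)/2 and let a : ℕ → ℝ satisfy a(k) ≥ 0 for all k and a(k)² ≥ r₀ · a(k-1) · a(k+1) for all k ≥ 1. Define b : ℕ → ℝ by b(0) = a(0)² and b(k) = a(k)² - a(k-1) · a(k+1) for k ≥ 1. Then b(k) ≥ 0 for all k, and b(k)² ≥ r₀ · b(k-1) · b(k+1) for all k ≥ 1. -/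
/-!
Write `r₀ = φ + 1 = φ²`, with `φ` the golden ratio. If `r a(k-1) a(k+1) ≤ a(k)²` and `r ≥ 1`, then
`b(k) = a(k)² - a(k-1) a(k+1) ≥ (r - 1) a(k-1) a(k+1) ≥ 0`. Since moreover `b(j) ≤ a(j)²`,
`r b(k-1) b(k+1) ≤ r (a(k-1) a(k+1))² ≤ ((r - 1) a(k-1) a(k+1))² ≤ b(k)²`
whenever `r ≤ (r - 1)²`, and `r₀` is the larger root of `r = (r - 1)²`.
-/

open Real

section

variable {r x y z : ℝ}

lemma sub_one_mul_le_sq_sub_mul (h : r * (x * z) ≤ y ^ 2) :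
    (r - 1) * (x * z) ≤ y ^ 2 - x * z := by
  linarith

lemma sq_sub_mul_nonneg (hr : 1 ≤ r) (hxz : 0 ≤ x * z) (h : r * (x * z) ≤ y ^ 2) :
    0 ≤ y ^ 2 - x * z :=
  (mul_nonneg (sub_nonneg.2 hr) hxz).trans (sub_one_mul_le_sq_sub_mul h)

lemma mul_le_sq_sub_mul_sq {u v : ℝ} (hr₁ : 1 ≤ r) (hr : r ≤ (r - 1) ^ 2) (hxz : 0 ≤ x * z)
    (hux : u ≤ x ^ 2) (hv : 0 ≤ v) (hvz : v ≤ z ^ 2) (h : r * (x * z) ≤ y ^ 2) :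
    r * (u * v) ≤ (y ^ 2 - x * z) ^ 2 :=
  calc r * (u * v) ≤ r * (x * z) ^ 2 := by
        rw [mul_pow]
        exact mul_le_mul_of_nonneg_left (mul_le_mul hux hvz hv (sq_nonneg x)) (by linarith)
    _ ≤ ((r - 1) * (x * z)) ^ 2 := by
        rw [mul_pow (r - 1)]
        gcongr
    _ ≤ (y ^ 2 - x * z) ^ 2 :=
        pow_le_pow_left₀ (mul_nonneg (sub_nonneg.2 hr₁) hxz) (sub_one_mul_le_sq_sub_mul h) 2

end

theorem L_preserves_factor_log_concave {r : ℝ} (hr₁ : 1 ≤ r) (hr : r ≤ (r - 1) ^ 2)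
    (a : ℕ → ℝ) (ha : ∀ k, 0 ≤ a k)
    (hfac : ∀ k, 1 ≤ k → r * (a (k - 1) * a (k + 1)) ≤ a k ^ 2)
    (b : ℕ → ℝ) (hb0 : b 0 = a 0 ^ 2)
    (hb : ∀ k, 1 ≤ k → b k = a k ^ 2 - a (k - 1) * a (k + 1)) :
    (∀ k, 0 ≤ b k) ∧ ∀ k, 1 ≤ k → r * (b (k - 1) * b (k + 1)) ≤ b k ^ 2 := by
  have hprod (k : ℕ) : 0 ≤ a (k - 1) * a (k + 1) := mul_nonneg (ha _) (ha _)
  have hb_nonneg (k : ℕ) : 0 ≤ b k := by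
    rcases Nat.eq_zero_or_pos k with rfl | hk
    · exact hb0 ▸ sq_nonneg _
    · exact hb k hk ▸ sq_sub_mul_nonneg hr₁ (hprod k) (hfac k hk)
  have hb_le (k : ℕ) : b k ≤ a k ^ 2 := by
    rcases Nat.eq_zero_or_pos k with rfl | hk
    · exact hb0.le
    · exact hb k hk ▸ sub_le_self _ (hprod k)
  refine ⟨hb_nonneg, fun k hk => ?_⟩
  rw [hb k hk]
  exact mul_le_sq_sub_mul_sq hr₁ hr (hprod k) (hb_le _) (hb_nonneg _) (hb_le _) (hfac k hk)

/-- McNamara–Sagan lemma: the `L`-operator preserves `r₀`-factor log concavity of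
nonnegative sequences for `r₀ = (3 + √5)/2`. -/
theorem L_preserves_r0_factor_log_concave (a : ℕ → ℝ)
    (ha : ∀ k, 0 ≤ a k)
    (hfac : ∀ k, 1 ≤ k → ((3 + Real.sqrt 5) / 2) * (a (k - 1) * a (k + 1)) ≤ (a k) ^ 2)
    (b : ℕ → ℝ) (hb0 : b 0 = (a 0) ^ 2)
    (hb : ∀ k, 1 ≤ k → b k = (a k) ^ 2 - a (k - 1) * a (k + 1)) :
    (∀ k, 0 ≤ b k) ∧
      (∀ k, 1 ≤ k → ((3 + Real.sqrt 5) / 2) * (b (k - 1) * b (k + 1)) ≤ (b k) ^ 2) := by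
  have hr₀ : (3 + √5) / 2 = goldenRatio + 1 := by
    rw [goldenRatio]
    ring
  rw [hr₀] at hfac ⊢
  refine L_preserves_factor_log_concave ?_ ?_ a ha hfac b hb0 hb
  · linarith [one_lt_goldenRatio]
  · rw [add_sub_cancel_right, goldenRatio_sq]
end

section
/- Let r₀ = (3 + √5)/2 and let a : ℕ → ℝ satisfy a(k) ≥ 0 for all k and a(k)² ≥ r₀ · a(k-1) · a(k+1) for all k ≥ 1. Define the operator L on sequences c : ℕ → ℝ by (L c)(0) = c(0)² and (L c)(k) = c(k)² - c(k-1) · c(k+1) for k ≥ 1. Then a is infinitely log concave: for every i ≥ 1 and every k, the i-fold iterate satisfies (L^[i] a)(k) ≥ 0. -/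
/-! Write `x = c(k-1) c(k+1)` and `y = c(k)²`, so that `(L c)(k) = y - x`. If `r ≥ 1` and
`r x ≤ y`, then `y - x ≥ (r - 1) x` gives `L c ≥ 0`, and for `c ≥ 0` also `L c ≤ c²`, whence
`(L c)(k-1) (L c)(k+1) ≤ x² ≤ (y - x)² / r` as soon as `r ≤ (r - 1)²`. So nonnegativity and
`r`-factor log concavity pass from `c` to `L c`. For `r = (3 + √5)/2 = φ + 1` the condition
reads `φ + 1 ≤ φ²`, which holds with equality. -/

/-- The `L`-operator on sequences: `(L c)(0) = c(0)²` and
`(L c)(k) = c(k)² - c(k-1)·c(k+1)` for `k ≥ 1`. -/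
def Lop (c : ℕ → ℝ) : ℕ → ℝ :=
  fun k => if k = 0 then (c 0) ^ 2 else (c k) ^ 2 - c (k - 1) * c (k + 1)

open Real goldenRatio

/-- The convention `c(-1) = 0` makes the condition at `k = 0` vacuous. -/
def IsFactorLogConcave (r : ℝ) (c : ℕ → ℝ) : Prop :=
  ∀ k, 1 ≤ k → r * (c (k - 1) * c (k + 1)) ≤ c k ^ 2

lemma mul_sq_le_sq_sub {r x y : ℝ} (hr₁ : 1 ≤ r) (hr : r ≤ (r - 1) ^ 2) (hx : 0 ≤ x)
    (hxy : r * x ≤ y) : r * x ^ 2 ≤ (y - x) ^ 2 :=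
  calc r * x ^ 2 ≤ (r - 1) ^ 2 * x ^ 2 := by gcongr
    _ = ((r - 1) * x) ^ 2 := by ring
    _ ≤ (y - x) ^ 2 :=
      pow_le_pow_left₀ (mul_nonneg (by linarith) hx) (by linarith) 2

section Lop

variable {r : ℝ} {c : ℕ → ℝ}

lemma Lop_of_one_le {k : ℕ} (hk : 1 ≤ k) : Lop c k = c k ^ 2 - c (k - 1) * c (k + 1) :=
  if_neg (Nat.one_le_iff_ne_zero.mp hk)

lemma Lop_le_sq (hc : ∀ k, 0 ≤ c k) (k : ℕ) : Lop c k ≤ c k ^ 2 := by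
  rcases Nat.eq_zero_or_pos k with rfl | hk
  · simp [Lop]
  · rw [Lop_of_one_le hk]
    nlinarith [mul_nonneg (hc (k - 1)) (hc (k + 1))]

lemma Lop_nonneg (hr₁ : 1 ≤ r) (hrc : IsFactorLogConcave r c) (k : ℕ) :
    0 ≤ Lop c k := by
  rcases Nat.eq_zero_or_pos k with rfl | hk
  · simp only [Lop, if_true]
    positivity
  · rw [Lop_of_one_le hk]
    nlinarith [hrc k hk]

lemma isFactorLogConcave_Lop (hr₁ : 1 ≤ r) (hr : r ≤ (r - 1) ^ 2) (hc : ∀ k, 0 ≤ c k)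
    (hrc : IsFactorLogConcave r c) : IsFactorLogConcave r (Lop c) := by
  intro k hk
  have hprod : Lop c (k - 1) * Lop c (k + 1) ≤ (c (k - 1) * c (k + 1)) ^ 2 :=
    calc Lop c (k - 1) * Lop c (k + 1) ≤ c (k - 1) ^ 2 * c (k + 1) ^ 2 :=
          mul_le_mul (Lop_le_sq hc _) (Lop_le_sq hc _) (Lop_nonneg hr₁ hrc _) (sq_nonneg _)
      _ = (c (k - 1) * c (k + 1)) ^ 2 := by ring
  rw [Lop_of_one_le hk]
  calc r * (Lop c (k - 1) * Lop c (k + 1)) ≤ r * (c (k - 1) * c (k + 1)) ^ 2 := by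
        gcongr
    _ ≤ (c k ^ 2 - c (k - 1) * c (k + 1)) ^ 2 :=
        mul_sq_le_sq_sub hr₁ hr (mul_nonneg (hc _) (hc _)) (hrc k hk)

lemma iterate_Lop_nonneg (hr₁ : 1 ≤ r) (hr : r ≤ (r - 1) ^ 2) (hc : ∀ k, 0 ≤ c k)
    (hrc : IsFactorLogConcave r c) (i k : ℕ) : 0 ≤ (Lop^[i] c) k := by
  have h : ∀ i, (∀ k, 0 ≤ (Lop^[i] c) k) ∧ IsFactorLogConcave r (Lop^[i] c) := by
    intro i
    induction i with
    | zero => exact ⟨hc, hrc⟩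
    | succ n ih =>
      rw [Function.iterate_succ_apply']
      exact ⟨Lop_nonneg hr₁ ih.2, isFactorLogConcave_Lop hr₁ hr ih.1 ih.2⟩
  exact (h i).1 k

end Lop

lemma three_add_sqrt_five_div_two : (3 + √5) / 2 = φ + 1 := by
  rw [goldenRatio]
  ring

/-- An `r₀`-factor log concave nonnegative sequence, with `r₀ = (3 + √5)/2`, is
infinitely log concave: every iterate of the `L`-operator is nonnegative. -/
theorem r0_factor_log_concave_infinitely_log_concave (a : ℕ → ℝ)
    (ha : ∀ k, 0 ≤ a k)
    (hfac : ∀ k, 1 ≤ k → ((3 + Real.sqrt 5) / 2) * (a (k - 1) * a (k + 1)) ≤ (a k) ^ 2) :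
    ∀ i, 1 ≤ i → ∀ k, 0 ≤ (Lop^[i] a) k := by
  rw [three_add_sqrt_five_div_two] at hfac
  have hr : φ + 1 ≤ (φ + 1 - 1) ^ 2 := by rw [add_sub_cancel_right, goldenRatio_sq]
  intro i _ k
  exact iterate_Lop_nonneg (by linarith [goldenRatio_pos]) hr ha hfac i k
end
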